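/- The 3×3 hermitian matrix H(z,α,s) with entries H₁₁ = g, H₁₂ = 0, H₁₃ = g·conj(a), H₂₁ = 0, H₂₂ = g_{L²}, H₂₃ = 0, H₃₁ = a·g, H₃₂ = 0, H₃₃ = g_{WP} + a·g·conj(a), where g = (α - conj α)/(s - conj s), g_{L²} = (i/2)(α - conj α)⁻¹, g_{WP} = (i/2)(α - conj α)/(s - conj s)², a = -(z - conj z)/(s - conj s), is positive definite for all z ∈ ℂ and α, s ∈ ℍ. -/

import Mathlib

/-!
Completing the square in the first coordinate gives `H = Lᴴ D L` with the shear
`L = !![1, 0, conj a; 0, 1, 0; 0, 0, 1]` and `D = diagonal ![g, g_{L²}, g_{WP}]`, so `H` is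
positive definite as soon as the three weights are. They are positive reals:
`g = Im α / Im s`, `g_{L²} = 1 / (4 Im α)` and `g_{WP} = Im α / (4 (Im s)²)`.
-/

open Complex Matrix
open scoped ComplexOrder ComplexConjugate

/-- The matrix of the natural metric on `ℂ × ℍ × ℍ`. -/
noncomputable def Hmat (z α s : ℂ) : Matrix (Fin 3) (Fin 3) ℂ :=
  let g : ℂ := (α - (starRingEnd ℂ) α) / (s - (starRingEnd ℂ) s)
  let gL2 : ℂ := Complex.I / 2 * (α - (starRingEnd ℂ) α)⁻¹
  let gWP : ℂ := Complex.I / 2 * (α - (starRingEnd ℂ) α) / (s - (starRingEnd ℂ) s) ^ 2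
  let a : ℂ := -(z - (starRingEnd ℂ) z) / (s - (starRingEnd ℂ) s)
  !![g, 0, g * (starRingEnd ℂ) a;
     0, gL2, 0;
     a * g, 0, gWP + a * g * (starRingEnd ℂ) a]

theorem Matrix.posDef_fin_three_of_pos {R : Type*} [Field R] [StarRing R] [PartialOrder R]
    [StarOrderedRing R] {g h k : R} (hg : 0 < g) (hh : 0 < h) (hk : 0 < k) (a : R) :
    (!![g, 0, g * star a; 0, h, 0; a * g, 0, k + a * g * star a] :
      Matrix (Fin 3) (Fin 3) R).PosDef := by
  let L : Matrix (Fin 3) (Fin 3) R := !![1, 0, star a; 0, 1, 0; 0, 0, 1]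
  have hL : Function.Injective L.mulVec := by
    refine mulVec_injective_iff_isUnit.2 ((isUnit_iff_isUnit_det L).2 ?_)
    simp [L, det_fin_three]
  have hD : (diagonal ![g, h, k]).PosDef := .diagonal fun i => by fin_cases i <;> assumption
  convert hD.conjTranspose_mul_mul_same hL using 1
  ext i j
  fin_cases i <;> fin_cases j <;> simp [L, mul_apply, Fin.sum_univ_three, mul_comm, add_comm]

namespace Complex

theorem sub_conj_div_sub_conj_pos {α s : ℂ} (hα : 0 < α.im) (hs : 0 < s.im) :
    0 < (α - conj α) / (s - conj s) := by
  rw [sub_conj, sub_conj, mul_div_mul_right _ _ I_ne_zero, ← ofReal_div, zero_lt_real]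
  positivity

theorem I_div_two_mul_inv_sub_conj_pos {α : ℂ} (hα : 0 < α.im) :
    0 < I / 2 * (α - conj α)⁻¹ := by
  have hα' : (α.im : ℂ) ≠ 0 := by exact_mod_cast hα.ne'
  have h : I / 2 * (α - conj α)⁻¹ = ((4 * α.im)⁻¹ : ℝ) := by
    rw [sub_conj]
    push_cast
    field_simp
    ring
  rw [h, zero_lt_real]
  positivity

theorem I_div_two_mul_sub_conj_div_sq_pos {α s : ℂ} (hα : 0 < α.im) (hs : 0 < s.im) :
    0 < I / 2 * (α - conj α) / (s - conj s) ^ 2 := by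
  have hs' : (s.im : ℂ) ≠ 0 := by exact_mod_cast hs.ne'
  have h : I / 2 * (α - conj α) / (s - conj s) ^ 2 = (α.im / (4 * s.im ^ 2) : ℝ) := by
    rw [sub_conj, sub_conj]
    push_cast
    field_simp
    norm_num
  rw [h, zero_lt_real]
  positivity

end Complex

/-- The matrix `H(z,α,s)` is positive definite for all `z ∈ ℂ` and `α, s` in the
upper half-plane. -/
theorem Hmat_posDef (z α s : ℂ) (hα : 0 < α.im) (hs : 0 < s.im) :
    (Hmat z α s).PosDef :=
  posDef_fin_three_of_pos (sub_conj_div_sub_conj_pos hα hs) (I_div_two_mul_inv_sub_conj_pos hα)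
    (I_div_two_mul_sub_conj_div_sq_pos hα hs) _
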